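/- Every word in GL(g) is a Lyndon word (i.e. it is strictly smaller, in the lexicographic order, than each of its proper nonempty suffixes), and the map GL(g) → P sending a word w[i_1,…,i_k] to |w| = α_{i_1} + ⋯ + α_{i_k} is a bijection from GL(g) onto the set Φ⁺ of reduced positive roots. -/

import Mathlib

set_option maxHeartbeats 1000000

namespace OSP

attribute [local instance] Classical.propDecidable

/-- The orthosymplectic type: `b`, `c`, or `d` (i.e. `𝔟(m|n)`, `𝔠(m|n)`, `𝔡(m|n)`). -/
inductive GType
  | b | c | d
deriving DecidableEq

/-- The base field `k = ℚ(q)`. -/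
abbrev K : Type := RatFunc ℚ

/-- The indeterminate `q`. -/
noncomputable def q : K := RatFunc.X

/-- `r_𝔤`: `2` for type `b`, `1` for types `c`, `d`. -/
def rg : GType → ℤ
  | .b => 2
  | _ => 1

/-- The weight lattice `P`, the free abelian group with basis `δ_a`, `a ∈ 𝕀 = {1,…,m+n}`;
an index `a : Fin (m+n)` corresponds to the paper's index `a+1`. -/
abbrev P (m n : ℕ) := Fin (m + n) → ℤ

/-- `δ_i` for a paper index `i ∈ {1,…,m+n}`. -/
def dlt (m n : ℕ) (i : ℕ) : P m n := fun a => if (a : ℕ) + 1 = i then 1 else 0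

/-- `ε_a` for a paper index `a` (also used for `ε_i`, `i ∈ I`): `0` if `a ≤ m`, else `1`. -/
def eps (m : ℕ) (a : ℕ) : ℕ := if a ≤ m then 0 else 1

/-- The symmetric bilinear form on `P`, `(δ_a|δ_b) = (−1)^{ε_a} r_𝔤 δ_{ab}`. -/
def form (g : GType) (m n : ℕ) (μ ν : P m n) : ℤ :=
  ∑ a : Fin (m + n), (-1 : ℤ) ^ eps m ((a : ℕ) + 1) * rg g * μ a * ν a

/-- `𝚚_a = (−1)^{ε_a} q^{(−1)^{ε_a} r_𝔤}` for a paper index `a ∈ {1,…,m+n}`. -/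
noncomputable def qA (g : GType) (m : ℕ) (a : ℕ) : K :=
  (-1 : K) ^ eps m a * q ^ ((-1 : ℤ) ^ eps m a * rg g)

/-- The symmetric biadditive map `𝐪(μ,ν) = ∏_a 𝚚_a^{μ_a ν_a}`. -/
noncomputable def qf (g : GType) (m n : ℕ) (μ ν : P m n) : K :=
  ∏ a : Fin (m + n), qA g m ((a : ℕ) + 1) ^ (μ a * ν a)

/-- The simple roots `α_i`, `i ∈ I = {0,1,…,m+n−1}`. -/
def alphaR (g : GType) (m n : ℕ) (i : ℕ) : P m n :=
  if i = 0 then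
    (match g with
      | GType.b => -dlt m n 1
      | GType.c => -((2 : ℤ) • dlt m n 1)
      | GType.d => -(dlt m n 1 + dlt m n 2))
  else dlt m n i - dlt m n (i + 1)

/-- `q_i = q^{|(α_i|α_i)|/2}` for `i ≠ m` and `q_m = q^{r_𝔤}`. -/
noncomputable def qi (g : GType) (m n : ℕ) (i : ℕ) : K :=
  if i = m then q ^ rg g
  else q ^ (((form g m n (alphaR g m n i) (alphaR g m n i)).natAbs / 2 : ℕ))

/-- The quantum integer `[s]_z = (z^s − z^{−s})/(z − z^{−1})`. -/
noncomputable def qn (z : K) (s : ℕ) : K := (z ^ s - z⁻¹ ^ s) / (z - z⁻¹)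

/-- `[s]_z! = [s]_z [s−1]_z ⋯ [1]_z`. -/
noncomputable def qnfac (z : K) (s : ℕ) : K := ∏ t ∈ Finset.range s, qn z (t + 1)

/-- `{s}_z = ((−z)^s − z^{−s})/(−z − z^{−1})`. -/
noncomputable def qb (z : K) (s : ℕ) : K := ((-z) ^ s - z⁻¹ ^ s) / (-z - z⁻¹)

/-- `{s}_z!`. -/
noncomputable def qbfac (z : K) (s : ℕ) : K := ∏ t ∈ Finset.range s, qb z (t + 1)

/-- Words in the alphabet `w_0 < w_1 < ⋯ < w_{m+n−1}`. -/
abbrev Word (m n : ℕ) := List (Fin (m + n))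

/-- The lexicographic order on words in which a proper prefix precedes the word itself. -/
def wlt {m n : ℕ} (u v : Word m n) : Prop := List.Lex (· < ·) u v

/-- The word `w[i,…,j] = w_i w_{i+1} ⋯ w_j` (empty if `j < i`). -/
def wrange (m n : ℕ) (i j : ℕ) : Word m n :=
  (List.finRange (m + n)).filter fun t => decide (i ≤ (t : ℕ) ∧ (t : ℕ) ≤ j)

/-- The set `𝒢ℒ(𝔤)` of good Lyndon words. -/
def GLw (g : GType) (m n : ℕ) : Set (Word m n) :=
  match g with
  | GType.b =>
      {w | ∃ i j : ℕ, i ≤ j ∧ j ≤ m + n - 1 ∧ w = wrange m n i j} ∪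
      {w | ∃ j k : ℕ, j < k ∧ k ≤ m + n - 1 ∧ w = wrange m n 0 j ++ wrange m n 0 k}
  | GType.c =>
      {w | ∃ i j : ℕ, i ≤ j ∧ j ≤ m + n - 1 ∧ w = wrange m n i j} ∪
      {w | ∃ j k : ℕ, 1 ≤ j ∧ j < k ∧ k ≤ m + n - 1 ∧
            w = wrange m n 0 k ++ wrange m n 1 j} ∪
      {w | ∃ k : ℕ, 1 ≤ k ∧ k ≤ m - 1 ∧ w = wrange m n 0 k ++ wrange m n 1 k}
  | GType.d =>
      {w | w = wrange m n 0 0} ∪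
      {w | ∃ i : ℕ, 2 ≤ i ∧ i ≤ m + n - 1 ∧ w = wrange m n 0 0 ++ wrange m n 2 i} ∪
      {w | ∃ i j : ℕ, 1 ≤ i ∧ i ≤ j ∧ j ≤ m + n - 1 ∧ w = wrange m n i j} ∪
      {w | ∃ j k : ℕ, 1 ≤ j ∧ j < k ∧ k ≤ m + n - 1 ∧
            w = wrange m n 0 0 ++ wrange m n 2 k ++ wrange m n 1 j} ∪
      {w | ∃ k : ℕ, m ≤ k ∧ k ≤ m + n - 1 ∧
            w = wrange m n 0 0 ++ wrange m n 2 k ++ wrange m n 1 k}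

/-- The weight `|w| = α_{i_1} + ⋯ + α_{i_k}` of a word `w = w_{i_1}⋯w_{i_k}`. -/
def wwt (g : GType) (m n : ℕ) (w : Word m n) : P m n :=
  (w.map fun t => alphaR g m n (t : ℕ)).sum

/-- The coefficient of `−δ_i` in the root `(i,i) = −(2/r_𝔤)δ_i`. -/
def diagC (g : GType) : ℤ := if g = GType.b then 1 else 2

/-- The root denoted `(i,j)` in the paper: `−δ_i − δ_j` for `i < j`, and `−(2/r_𝔤)δ_i`
for `i = j`. -/
def rt (g : GType) (m n : ℕ) (i j : ℕ) : P m n :=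
  if i = j then -(diagC g • dlt m n i) else -(dlt m n i + dlt m n j)

/-- The condition for `(i,j)` to be an element of `Φ⁺(𝔲)`. -/
def uIdx (g : GType) (m n : ℕ) (i j : ℕ) : Prop :=
  (1 ≤ i ∧ i < j ∧ j ≤ m + n) ∨
    (i = j ∧ match g with
      | GType.b => 1 ≤ i ∧ i ≤ m + n
      | GType.c => 1 ≤ i ∧ i ≤ m
      | GType.d => m + 1 ≤ i ∧ i ≤ m + n)

/-- The set `Φ⁺(𝔲)`. -/
def PhiU (g : GType) (m n : ℕ) : Set (P m n) :=
  {p | ∃ i j : ℕ, uIdx g m n i j ∧ p = rt g m n i j}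

/-- The set `Φ⁺(𝔩) = {δ_i − δ_j : 1 ≤ i < j ≤ m+n}`. -/
def PhiL (m n : ℕ) : Set (P m n) :=
  {p | ∃ i j : ℕ, 1 ≤ i ∧ i < j ∧ j ≤ m + n ∧ p = dlt m n i - dlt m n j}

/-- The set `Φ⁺ = Φ⁺(𝔲) ∪ Φ⁺(𝔩)` of reduced positive roots. -/
def PhiPlus (g : GType) (m n : ℕ) : Set (P m n) := PhiU g m n ∪ PhiL m n

/-- The set `Φ` of all roots of `𝔤` (reduced positive roots, their negatives, and in
type `b` also the non-reduced roots `±2δ_u`, `m+1 ≤ u ≤ m+n`). -/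
def PhiAll (g : GType) (m n : ℕ) : Set (P m n) :=
  PhiPlus g m n ∪ (fun p => -p) '' PhiPlus g m n ∪
    {p | g = GType.b ∧ ∃ u : ℕ, m + 1 ≤ u ∧ u ≤ m + n ∧
      (p = (2 : ℤ) • dlt m n u ∨ p = -((2 : ℤ) • dlt m n u))}

/-- `A₀ ⊆ ℚ(q)`: the subring of rational functions regular at `q = 0`. -/
def A0 : Set K :=
  {f | ∃ p r : Polynomial ℚ, r.coeff 0 ≠ 0 ∧
    f = algebraMap (Polynomial ℚ) K p / algebraMap (Polynomial ℚ) K r}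

/-- The linear order `≺` on `Φ⁺(𝔲)`, written on index pairs. -/
def precU (g : GType) (i1 j1 i2 j2 : ℕ) : Prop :=
  match g with
  | GType.b => i1 < i2 ∨ (i1 = i2 ∧ j1 < j2)
  | _ => j1 < j2 ∨ (j1 = j2 ∧ i1 < i2)

end OSP

/-!
Every reduced positive root is attached to an explicit word: `δ_i − δ_j` to `w[i,…,j−1]`, and the
roots `(i,j)` of `Φ⁺(𝔲)` to the type-dependent words `w[0,…,i−1]w[0,…,j−1]`,
`w[0,…,j−1]w[1,…,i−1]`, `w_0 w[2,…,j−1]w[1,…,i−1]` (and their analogues for `i = j`).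
These are exactly the good Lyndon words, and since `α_i = δ_i − δ_{i+1}` for `i ≥ 1` the weight
of each telescopes to its root; distinct index data give distinct roots, which is seen by
comparing coefficients. Almost every such word begins with a letter smaller than all its other
letters, which makes it Lyndon; the exception, `w[0,…,i−1]w[0,…,j−1]` in type `b`, is the product
of the Lyndon words `w[0,…,i−1] < w[0,…,j−1]`.
-/

namespace List

variable {α : Type*}

theorem Lex.append_of_not_prefix {r : α → α → Prop} {u v : List α} (h : Lex r u v)
    (hp : ¬ u <+: v) (x y : List α) : Lex r (u ++ x) (v ++ y) := by
  induction h with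
  | nil => exact absurd nil_prefix hp
  | cons _ ih => exact .cons (ih fun hp' => hp (cons_prefix_cons.mpr ⟨rfl, hp'⟩))
  | rel h => exact .rel h

def IsLyndon [LT α] (w : List α) : Prop :=
  ∀ t s, w = t ++ s → t ≠ [] → s ≠ [] → w < s

theorem isLyndon_cons_of_forall_lt [LT α] {a : α} {l : List α} (h : ∀ x ∈ l, a < x) :
    IsLyndon (a :: l) := by
  rintro (_ | ⟨b, t⟩) (_ | ⟨c, s⟩) hw ht hs
  · exact absurd rfl ht
  · exact absurd rfl ht
  · exact absurd rfl hs
  · obtain ⟨-, rfl⟩ := cons_eq_cons.mp hw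
    exact .rel (h c (by simp))

variable [LinearOrder α]

theorem IsLyndon.append_lt {u v : List α} (hv : IsLyndon v) (hu : u ≠ []) (huv : u < v) :
    u ++ v < v := by
  by_cases hp : u <+: v
  · obtain ⟨v', rfl⟩ := hp
    have hv' : v' ≠ [] := by
      rintro rfl
      simp at huv
    simpa using append_left_lt (l₁ := u) (hv u v' rfl hu hv')
  · simpa using huv.append_of_not_prefix hp v []

theorem IsLyndon.append {u v : List α} (hu : IsLyndon u) (hv : IsLyndon v) (hu₀ : u ≠ [])
    (huv : u < v) : IsLyndon (u ++ v) := by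
  intro t s hts ht hs
  rcases append_eq_append_iff.mp hts with ⟨a, rfl, rfl⟩ | ⟨c, rfl, rfl⟩
  · rcases eq_or_ne a [] with rfl | ha
    · simpa using hv.append_lt hu₀ huv
    · exact List.lt_trans (hv.append_lt hu₀ huv) (hv a s rfl ha hs)
  · rcases eq_or_ne c [] with rfl | hc
    · simpa using hv.append_lt hu₀ huv
    · refine (hu t c rfl ht hc).append_of_not_prefix (fun hp => ?_) v v
      have hlen := hp.length_le
      rw [length_append] at hlen
      have := length_pos_iff.mpr ht
      omega

end List

namespace OSP

section Wrange

variable {m n : ℕ}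

theorem mem_wrange {i j : ℕ} {t : Fin (m + n)} : t ∈ wrange m n i j ↔ i ≤ t ∧ t ≤ j := by
  simp [wrange]

theorem wrange_eq_nil {i j : ℕ} (h : j < i) : wrange m n i j = [] := by
  simp only [wrange, List.filter_eq_nil_iff, decide_eq_true_eq]
  omega

theorem pairwise_wrange (i j : ℕ) : (wrange m n i j).Pairwise (· < ·) :=
  (List.pairwise_lt_finRange _).filter _

theorem wrange_eq_cons {i j : ℕ} (hij : i ≤ j) (hj : j < m + n) :
    wrange m n i j = ⟨i, by omega⟩ :: wrange m n (i + 1) j := by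
  refine (pairwise_wrange i j).eq_of_mem_iff ?_ fun t => ?_
  · refine List.pairwise_cons.mpr ⟨fun t ht => ?_, pairwise_wrange _ _⟩
    rw [mem_wrange] at ht
    exact Fin.lt_def.mpr (by simp; omega)
  · simp only [List.mem_cons, mem_wrange, Fin.ext_iff]
    omega

theorem wrange_append {i j k : ℕ} (hij : i ≤ j + 1) (hjk : j ≤ k) :
    wrange m n i j ++ wrange m n (j + 1) k = wrange m n i k := by
  refine Eq.symm <| (pairwise_wrange i k).eq_of_mem_iff ?_ fun t => ?_
  · refine List.pairwise_append.mpr ⟨pairwise_wrange _ _, pairwise_wrange _ _, fun a ha b hb => ?_⟩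
    rw [mem_wrange] at ha hb
    exact Fin.lt_def.mpr (by omega)
  · simp only [List.mem_append, mem_wrange]
    omega

theorem wrange_lt_wrange {k i j : ℕ} (hki : k ≤ i) (hij : i < j) (hj : j < m + n) :
    wrange m n k i < wrange m n k j := by
  rw [← wrange_append (i := k) (j := i) (k := j) (by omega) hij.le,
    wrange_eq_cons (i := i + 1) hij hj]
  simpa using List.append_left_lt (l₁ := wrange m n k i) (List.nil_lt_cons _ _)

theorem isLyndon_wrange_append {i j : ℕ} (hij : i ≤ j) (hj : j < m + n) {x : Word m n}
    (hx : ∀ t ∈ x, i < (t : ℕ)) : (wrange m n i j ++ x).IsLyndon := by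
  rw [wrange_eq_cons hij hj, List.cons_append]
  refine List.isLyndon_cons_of_forall_lt fun t ht => ?_
  rcases List.mem_append.mp ht with ht | ht
  · exact Fin.lt_def.mpr (mem_wrange.mp ht).1
  · exact hx t ht

theorem isLyndon_wrange {i j : ℕ} (hij : i ≤ j) (hj : j < m + n) : (wrange m n i j).IsLyndon := by
  simpa using isLyndon_wrange_append hij hj (x := []) (by simp)

end Wrange

section Weight

variable {g : GType} {m n : ℕ}

@[simp]
theorem wwt_cons (a : Fin (m + n)) (w : Word m n) :
    wwt g m n (a :: w) = alphaR g m n a + wwt g m n w := by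
  simp [wwt]

@[simp]
theorem wwt_append (u v : Word m n) : wwt g m n (u ++ v) = wwt g m n u + wwt g m n v := by
  simp [wwt]

theorem alphaR_of_ne_zero {i : ℕ} (hi : i ≠ 0) : alphaR g m n i = dlt m n i - dlt m n (i + 1) :=
  if_neg hi

theorem wwt_wrange {i j : ℕ} (hi : 1 ≤ i) (hij : i ≤ j + 1) (hj : j < m + n) :
    wwt g m n (wrange m n i j) = dlt m n i - dlt m n (j + 1) := by
  induction h : j + 1 - i generalizing i with
  | zero =>
    obtain rfl : i = j + 1 := by omega
    rw [wrange_eq_nil (Nat.lt_succ_self j), sub_self]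
    rfl
  | succ k ih =>
    rw [wrange_eq_cons (by omega) hj, wwt_cons, ih (i := i + 1) (by omega) (by omega) (by omega),
      alphaR_of_ne_zero (by omega : i ≠ 0)]
    abel

theorem wwt_wrange_zero {j : ℕ} (hj : j < m + n) :
    wwt g m n (wrange m n 0 j) = alphaR g m n 0 + (dlt m n 1 - dlt m n (j + 1)) := by
  rw [wrange_eq_cons (Nat.zero_le j) hj, wwt_cons, wwt_wrange le_rfl (by omega) hj]

end Weight

/-- Indices of the reduced positive roots: `lower i j` is `δ_i − δ_j`, `upper i j` is `(i,j)`
with `i < j`, and `diag i` is `(i,i)`. -/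
inductive RootIndex
  | lower (i j : ℕ)
  | upper (i j : ℕ)
  | diag (i : ℕ)

namespace RootIndex

variable {g : GType} {m n : ℕ}

def root (g : GType) (m n : ℕ) : RootIndex → P m n
  | lower i j => dlt m n i - dlt m n j
  | upper i j => rt g m n i j
  | diag i => rt g m n i i

def IsValid (g : GType) (m n : ℕ) : RootIndex → Prop
  | lower i j | upper i j => 1 ≤ i ∧ i < j ∧ j ≤ m + n
  | diag i => uIdx g m n i i

def word (g : GType) (m n : ℕ) (r : RootIndex) : Word m n :=
  match g, r with
  | _, lower i j => wrange m n i (j - 1)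
  | .b, upper i j => wrange m n 0 (i - 1) ++ wrange m n 0 (j - 1)
  | .c, upper i j => wrange m n 0 (j - 1) ++ wrange m n 1 (i - 1)
  | .d, upper i j => wrange m n 0 0 ++ wrange m n 2 (j - 1) ++ wrange m n 1 (i - 1)
  | .b, diag i => wrange m n 0 (i - 1)
  | .c, diag i => wrange m n 0 (i - 1) ++ wrange m n 1 (i - 1)
  | .d, diag i => wrange m n 0 0 ++ wrange m n 2 (i - 1) ++ wrange m n 1 (i - 1)

def fst : RootIndex → ℕ
  | lower i _ | upper i _ | diag i => i

def snd : RootIndex → ℕ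
  | lower _ j | upper _ j | diag j => j

theorem IsValid.bounds {r : RootIndex} (hr : r.IsValid g m n) :
    1 ≤ r.fst ∧ r.fst ≤ r.snd ∧ r.snd ≤ m + n := by
  cases g <;> rcases r with ⟨i, j⟩ | ⟨i, j⟩ | i <;>
    simp only [IsValid, uIdx, fst, snd] at hr ⊢ <;> omega

theorem root_injOn : Set.InjOn (root g m n) {r | r.IsValid g m n} := by
  intro r hr r' hr' h
  have hc : diagC g = 1 ∨ diagC g = 2 := by unfold diagC; split_ifs <;> simp
  obtain ⟨hb, hb'⟩ := And.intro hr.bounds hr'.bounds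
  have e₁ := congrFun h ⟨r.fst - 1, by omega⟩
  have e₂ := congrFun h ⟨r.snd - 1, by omega⟩
  have e₃ := congrFun h ⟨r'.fst - 1, by omega⟩
  have e₄ := congrFun h ⟨r'.snd - 1, by omega⟩
  rcases r with ⟨i, j⟩ | ⟨i, j⟩ | i <;> rcases r' with ⟨i', j'⟩ | ⟨i', j'⟩ | i' <;>
    simp only [fst, snd, Set.mem_ofPred_eq, IsValid] at e₁ e₂ e₃ e₄ hb hb' hr hr' <;>
    simp (disch := omega) only [root, rt, dlt, Pi.sub_apply, Pi.neg_apply, Pi.add_apply,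
      Pi.smul_apply, smul_eq_mul, Nat.sub_add_cancel, if_neg, if_true, lower.injEq, upper.injEq,
      diag.injEq, reduceCtorEq] at e₁ e₂ e₃ e₄ ⊢ <;>
    (try split_ifs at e₁ e₂ e₃ e₄) <;> omega

theorem PhiPlus_eq_image : PhiPlus g m n = root g m n '' {r | r.IsValid g m n} := by
  ext p
  constructor
  · rintro (⟨i, j, (hij | ⟨rfl, hi⟩), rfl⟩ | ⟨i, j, hi, hij, hj, rfl⟩)
    · exact ⟨upper i j, hij, rfl⟩
    · exact ⟨diag i, Or.inr ⟨rfl, hi⟩, rfl⟩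
    · exact ⟨lower i j, ⟨hi, hij, hj⟩, rfl⟩
  · rintro ⟨(⟨i, j⟩ | ⟨i, j⟩ | i), hr, rfl⟩
    · exact Or.inr ⟨i, j, hr.1, hr.2.1, hr.2.2, rfl⟩
    · exact Or.inl ⟨i, j, Or.inl hr, rfl⟩
    · exact Or.inl ⟨i, i, hr, rfl⟩

theorem wwt_word {r : RootIndex} (hm : 2 ≤ m) (hr : r.IsValid g m n) :
    wwt g m n (r.word g m n) = r.root g m n := by
  cases g <;> rcases r with ⟨i, j⟩ | ⟨i, j⟩ | i <;>
    simp only [IsValid, uIdx] at hr <;>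
    simp (disch := omega) only [word, root, rt, wwt_append, wwt_wrange_zero, wwt_wrange,
      Nat.sub_add_cancel, if_pos, if_neg, alphaR, diagC, reduceIte, reduceCtorEq, zero_add] <;>
    abel

theorem isLyndon_word {r : RootIndex} (hr : r.IsValid g m n) :
    (r.word g m n).IsLyndon := by
  cases g <;> rcases r with ⟨i, j⟩ | ⟨i, j⟩ | i <;> simp only [IsValid, uIdx] at hr <;>
    simp only [word]
  case b.upper =>
    refine (isLyndon_wrange (by omega) (by omega)).append (isLyndon_wrange (by omega) (by omega))
      ?_ (wrange_lt_wrange (Nat.zero_le _) (by omega) (by omega))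
    rw [wrange_eq_cons (by omega) (by omega)]
    exact List.cons_ne_nil _ _
  all_goals
    try rw [List.append_assoc]
  all_goals first
    | exact isLyndon_wrange (by omega) (by omega)
    | refine isLyndon_wrange_append (by omega) (by omega) fun t ht => ?_
      simp only [List.mem_append, mem_wrange] at ht
      omega

theorem word_mem_GLw {r : RootIndex} (hr : r.IsValid g m n) :
    r.word g m n ∈ GLw g m n := by
  cases g <;> rcases r with ⟨i, j⟩ | ⟨i, j⟩ | i <;> simp only [IsValid, uIdx] at hr <;>
    simp only [word, GLw, Set.mem_union, Set.mem_ofPred_eq]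
  case b.lower => exact .inl ⟨i, j - 1, by omega, by omega, rfl⟩
  case b.upper => exact .inr ⟨i - 1, j - 1, by omega, by omega, rfl⟩
  case b.diag => exact .inl ⟨0, i - 1, by omega, by omega, rfl⟩
  case c.lower => exact .inl (.inl ⟨i, j - 1, by omega, by omega, rfl⟩)
  case c.upper =>
    rcases eq_or_ne i 1 with rfl | hi
    · exact .inl (.inl ⟨0, j - 1, by omega, by omega, by simp [wrange_eq_nil]⟩)
    · exact .inl (.inr ⟨i - 1, j - 1, by omega, by omega, by omega, rfl⟩)
  case c.diag =>
    rcases eq_or_ne i 1 with rfl | hi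
    · exact .inl (.inl ⟨0, 0, by omega, by omega, by simp [wrange_eq_nil]⟩)
    · exact .inr ⟨i - 1, by omega, by omega, rfl⟩
  case d.lower => exact .inl (.inl (.inr ⟨i, j - 1, by omega, by omega, by omega, rfl⟩))
  case d.upper =>
    rcases eq_or_ne i 1 with rfl | hi
    · rcases eq_or_ne j 2 with rfl | hj
      · exact .inl (.inl (.inl (.inl (by simp [wrange_eq_nil]))))
      · exact .inl (.inl (.inl (.inr ⟨j - 1, by omega, by omega, by simp [wrange_eq_nil]⟩)))
    · exact .inl (.inr ⟨i - 1, j - 1, by omega, by omega, by omega, rfl⟩)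
  case d.diag => exact .inr ⟨i - 1, by omega, by omega, rfl⟩

theorem exists_word_eq_of_mem_GLw {w : Word m n} (hm : 2 ≤ m) (hw : w ∈ GLw g m n) :
    ∃ r : RootIndex, r.IsValid g m n ∧ r.word g m n = w := by
  cases g <;> simp only [GLw, Set.mem_union, Set.mem_ofPred_eq] at hw
  case b =>
    rcases hw with ⟨i, j, hij, hj, rfl⟩ | ⟨j, k, hjk, hk, rfl⟩
    · rcases Nat.eq_zero_or_pos i with rfl | hi
      · exact ⟨diag (j + 1), by simp only [IsValid, uIdx, true_and]; omega, by simp [word]⟩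
      · exact ⟨lower i (j + 1), by simp only [IsValid]; omega, by simp [word]⟩
    · exact ⟨upper (j + 1) (k + 1), by simp only [IsValid]; omega, by simp [word]⟩
  case c =>
    rcases hw with (⟨i, j, hij, hj, rfl⟩ | ⟨j, k, hj, hjk, hk, rfl⟩) | ⟨k, hk, hkm, rfl⟩
    · rcases Nat.eq_zero_or_pos i with rfl | hi
      · rcases Nat.eq_zero_or_pos j with rfl | hj
        · exact ⟨diag 1, by simp only [IsValid, uIdx, true_and]; omega,
            by simp [word, wrange_eq_nil]⟩
        · exact ⟨upper 1 (j + 1), by simp only [IsValid]; omega, by simp [word, wrange_eq_nil]⟩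
      · exact ⟨lower i (j + 1), by simp only [IsValid]; omega, by simp [word]⟩
    · exact ⟨upper (j + 1) (k + 1), by simp only [IsValid]; omega, by simp [word]⟩
    · exact ⟨diag (k + 1), by simp only [IsValid, uIdx, true_and]; omega, by simp [word]⟩
  case d =>
    rcases hw with (((rfl | ⟨i, hi, hin, rfl⟩) | ⟨i, j, hi, hij, hj, rfl⟩) |
      ⟨j, k, hj, hjk, hk, rfl⟩) | ⟨k, hk, hkn, rfl⟩
    · exact ⟨upper 1 2, by simp only [IsValid]; omega, by simp [word, wrange_eq_nil]⟩
    · exact ⟨upper 1 (i + 1), by simp only [IsValid]; omega, by simp [word, wrange_eq_nil]⟩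
    · exact ⟨lower i (j + 1), by simp only [IsValid]; omega, by simp [word]⟩
    · exact ⟨upper (j + 1) (k + 1), by simp only [IsValid]; omega, by simp [word]⟩
    · exact ⟨diag (k + 1), by simp only [IsValid, uIdx, true_and]; omega, by simp [word]⟩

theorem GLw_eq_image (hm : 2 ≤ m) : GLw g m n = word g m n '' {r | r.IsValid g m n} :=
  Set.ext fun _ => ⟨exists_word_eq_of_mem_GLw hm, fun ⟨_, hr, hw⟩ => hw ▸ word_mem_GLw hr⟩

end RootIndex

theorem statement0_general (g : GType) (m n : ℕ) (hm : 2 ≤ m) :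
    (∀ w ∈ GLw g m n, ∀ t s : Word m n, w = t ++ s → t ≠ [] → s ≠ [] → wlt w s) ∧
    Set.BijOn (wwt g m n) (GLw g m n) (PhiPlus g m n) := by
  have hwt : Set.EqOn (wwt g m n ∘ RootIndex.word g m n) (RootIndex.root g m n)
      {r | r.IsValid g m n} := fun _ hr => RootIndex.wwt_word hm hr
  rw [RootIndex.GLw_eq_image hm]
  refine ⟨?_, ?_⟩
  · rintro _ ⟨r, hr, rfl⟩
    exact RootIndex.isLyndon_word hr
  · rw [RootIndex.PhiPlus_eq_image, ← hwt.image_eq, Set.image_comp]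
    exact (RootIndex.root_injOn.congr hwt.symm).image_of_comp.bijOn_image

/-- Every word in `𝒢ℒ(𝔤)` is a Lyndon word (strictly smaller, in the
lexicographic order, than each of its proper nonempty suffixes), and the map
`𝒢ℒ(𝔤) → P`, `w = w[i_1,…,i_k] ↦ |w| = α_{i_1} + ⋯ + α_{i_k}`, is a bijection from
`𝒢ℒ(𝔤)` onto the set `Φ⁺` of reduced positive roots. -/
theorem statement0 (g : GType) (m n : ℕ) (hm : 2 ≤ m) (hn : 1 ≤ n) :
    (∀ w ∈ GLw g m n, ∀ t s : Word m n, w = t ++ s → t ≠ [] → s ≠ [] → wlt w s) ∧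
    Set.BijOn (wwt g m n) (GLw g m n) (PhiPlus g m n) :=
  statement0_general g m n hm

end OSP
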